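/- arXiv:1806.00681 — 2 statements merged into one kernel-verified Lean document; each statement's English description precedes it below -/
import Mathlib

section
/- Suppose ρ is symmetric and nonnegative, and z : [0,∞) × Ω → ℝ solves the nonlocal diffusion equation with initial datum u. Assume that for every t ≥ 0 the functions (x,y) ↦ ρ(x,y)(z(t,y) − z(t,x))z(t,x) and (x,y) ↦ ρ(x,y)(z(t,y) − z(t,x))² are integrable on Ω × Ω, and that differentiation under the integral sign is valid, i.e., t ↦ ∫_Ω z(t,x)² dx is differentiable with derivative ∫_Ω 2 z(t,x) ∂_t z(t,x) dx. Then the energy is nonincreasing: (d/dt) ∫_Ω z(t,x)² dx ≤ 0 for all t ≥ 0. (Energy decay, proved within Theorem 2.) -/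
open MeasureTheory

/-- Energy decay (proved within Theorem 2): if `ρ` is symmetric and nonnegative
on `Ω`, `z` solves the nonlocal diffusion equation `∂_t z(t,x) = (L z(t,·))(x)`
with initial datum `u` (`zt` denotes the time derivative of `z`), the functions
`(x,y) ↦ ρ(x,y)(z(t,y) - z(t,x)) z(t,x)` and `(x,y) ↦ ρ(x,y)(z(t,y) - z(t,x))²`
are integrable on `Ω × Ω` for each `t ≥ 0`, and differentiation under the
integral sign is valid for `t ↦ ∫_Ω z(t,x)² dx`, then the energy is
nonincreasing: `(d/dt) ∫_Ω z(t,x)² dx ≤ 0` for all `t ≥ 0`. -/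
theorem nonlocal_diffusion_energy_decay (d : ℕ) (Ω : Set (Fin d → ℝ))
    (hΩ : MeasurableSet Ω) (hfin : volume Ω < ⊤) (hpos : 0 < volume Ω)
    (ρ : (Fin d → ℝ) → (Fin d → ℝ) → ℝ) (hρ : Measurable (Function.uncurry ρ))
    (hsymm : ∀ x ∈ Ω, ∀ y ∈ Ω, ρ x y = ρ y x)
    (hnonneg : ∀ x ∈ Ω, ∀ y ∈ Ω, 0 ≤ ρ x y)
    (z zt : ℝ → (Fin d → ℝ) → ℝ) (u : (Fin d → ℝ) → ℝ)
    (hderiv : ∀ t ≥ (0 : ℝ), ∀ x ∈ Ω, HasDerivAt (fun s => z s x) (zt t x) t)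
    (hpde : ∀ t ≥ (0 : ℝ), ∀ x ∈ Ω, zt t x = ∫ y in Ω, ρ x y * (z t y - z t x))
    (hinit : ∀ x ∈ Ω, z 0 x = u x)
    (hint1 : ∀ t ≥ (0 : ℝ), IntegrableOn
      (fun p : (Fin d → ℝ) × (Fin d → ℝ) =>
        ρ p.1 p.2 * (z t p.2 - z t p.1) * z t p.1) (Ω ×ˢ Ω))
    (hint2 : ∀ t ≥ (0 : ℝ), IntegrableOn
      (fun p : (Fin d → ℝ) × (Fin d → ℝ) =>
        ρ p.1 p.2 * (z t p.2 - z t p.1) ^ 2) (Ω ×ˢ Ω))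
    (hdui : ∀ t ≥ (0 : ℝ),
      HasDerivAt (fun s => ∫ x in Ω, (z s x) ^ 2)
        (∫ x in Ω, 2 * z t x * zt t x) t) :
    ∀ t ≥ (0 : ℝ), deriv (fun s => ∫ x in Ω, (z s x) ^ 2) t ≤ 0 := by
  intro t ht
  rw [(hdui t ht).deriv]
  set F : (Fin d → ℝ) × (Fin d → ℝ) → ℝ :=
    fun p => ρ p.1 p.2 * (z t p.2 - z t p.1) * z t p.1 with hF
  set G : (Fin d → ℝ) × (Fin d → ℝ) → ℝ :=
    fun p => ρ p.1 p.2 * (z t p.2 - z t p.1) ^ 2 with hG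
  have hprod : (volume : Measure ((Fin d → ℝ) × (Fin d → ℝ))).restrict (Ω ×ˢ Ω)
      = ((volume.restrict Ω).prod (volume.restrict Ω)) := by
    rw [MeasureTheory.Measure.volume_eq_prod, Measure.prod_restrict]
  have hFint : Integrable F ((volume.restrict Ω).prod (volume.restrict Ω)) := by
    have := hint1 t ht
    rwa [IntegrableOn, hprod] at this
  have hFswapint : Integrable (fun p => F p.swap)
      ((volume.restrict Ω).prod (volume.restrict Ω)) := hFint.swap
  -- Step 1: the derivative equals 2 times the double integral of F
  have step1 : (∫ x in Ω, 2 * z t x * zt t x)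
      = 2 * ∫ p, F p ∂((volume.restrict Ω).prod (volume.restrict Ω)) := by
    have h1 : (∫ x in Ω, 2 * z t x * zt t x)
        = ∫ x in Ω, ∫ y in Ω, 2 * F (x, y) := by
      refine setIntegral_congr_fun hΩ fun x hx => ?_
      rw [hpde t ht x hx, ← integral_const_mul]
      refine integral_congr_ae (Filter.Eventually.of_forall fun y => ?_)
      simp only [hF]
      ring
    rw [h1, MeasureTheory.integral_integral ((hFint.const_mul 2)),
      integral_const_mul]
  -- Step 2: swapping variables
  have step2 : (∫ p, F p ∂((volume.restrict Ω).prod (volume.restrict Ω)))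
      = ∫ p, F p.swap ∂((volume.restrict Ω).prod (volume.restrict Ω)) :=
    (MeasureTheory.integral_prod_swap F).symm
  -- Step 3: sum is minus G
  have step3 : (∫ p, F p ∂((volume.restrict Ω).prod (volume.restrict Ω)))
      + (∫ p, F p.swap ∂((volume.restrict Ω).prod (volume.restrict Ω)))
      = - ∫ p, G p ∂((volume.restrict Ω).prod (volume.restrict Ω)) := by
    rw [← integral_add hFint hFswapint, ← integral_neg, ← hprod]
    refine setIntegral_congr_fun (hΩ.prod hΩ) fun p hp => ?_
    obtain ⟨hp1, hp2⟩ := hp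
    simp only [hF, hG, Prod.fst_swap, Prod.snd_swap]
    rw [hsymm p.2 hp2 p.1 hp1]
    ring
  have hGnonneg : 0 ≤ ∫ p, G p ∂((volume.restrict Ω).prod (volume.restrict Ω)) := by
    rw [← hprod]
    refine setIntegral_nonneg (hΩ.prod hΩ) fun p hp => ?_
    exact mul_nonneg (hnonneg p.1 hp.1 p.2 hp.2) (sq_nonneg _)
  rw [step1]
  nlinarith [step2, step3, hGnonneg]
end

section
/- Suppose ρ is symmetric and nonnegative, and z : [0,∞) × Ω → ℝ solves the nonlocal diffusion equation with initial datum u. Assume that for every t ≥ 0 the relevant integrands are integrable on Ω × Ω, that the mean ∫_Ω z(t,x) dx equals ∫_Ω u(x) dx for all t, and that differentiation under the integral sign is valid for t ↦ var(z(t,·)), with derivative (2/|Ω|) ∫_Ω (z(t,x) − (1/|Ω|)∫_Ω u(y) dy) ∂_t z(t,x) dx. Then the variance is nonincreasing: (d/dt) var(z(t,·)) ≤ 0 for all t ≥ 0. (Theorem 3.) -/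
open MeasureTheory

/-- Theorem 3: with `var(f) = (1/|Ω|) ∫_Ω (f(x) - (1/|Ω|) ∫_Ω f(y) dy)² dx`,
if `ρ` is symmetric and nonnegative, `z` solves the nonlocal diffusion equation
`∂_t z(t,x) = (L z(t,·))(x)` with initial datum `u` (`zt` denotes the time
derivative of `z`), the relevant integrands are integrable, the mean
`∫_Ω z(t,x) dx` equals `∫_Ω u(x) dx` for all `t ≥ 0`, and differentiation under
the integral sign is valid for `t ↦ var(z(t,·))` with derivative
`(2/|Ω|) ∫_Ω (z(t,x) - (1/|Ω|) ∫_Ω u(y) dy) ∂_t z(t,x) dx`, then the variance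
is nonincreasing: `(d/dt) var(z(t,·)) ≤ 0` for all `t ≥ 0`. -/
theorem nonlocal_diffusion_variance_decay (d : ℕ) (Ω : Set (Fin d → ℝ))
    (hΩ : MeasurableSet Ω) (hfin : volume Ω < ⊤) (hpos : 0 < volume Ω)
    (ρ : (Fin d → ℝ) → (Fin d → ℝ) → ℝ) (hρ : Measurable (Function.uncurry ρ))
    (hsymm : ∀ x ∈ Ω, ∀ y ∈ Ω, ρ x y = ρ y x)
    (hnonneg : ∀ x ∈ Ω, ∀ y ∈ Ω, 0 ≤ ρ x y)
    (z zt : ℝ → (Fin d → ℝ) → ℝ) (u : (Fin d → ℝ) → ℝ)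
    (hderiv : ∀ t ≥ (0 : ℝ), ∀ x ∈ Ω, HasDerivAt (fun s => z s x) (zt t x) t)
    (hpde : ∀ t ≥ (0 : ℝ), ∀ x ∈ Ω, zt t x = ∫ y in Ω, ρ x y * (z t y - z t x))
    (hinit : ∀ x ∈ Ω, z 0 x = u x)
    (hint0 : ∀ t ≥ (0 : ℝ), IntegrableOn (fun x => z t x) Ω)
    (hint1 : ∀ t ≥ (0 : ℝ), IntegrableOn
      (fun p : (Fin d → ℝ) × (Fin d → ℝ) => ρ p.1 p.2 * (z t p.2 - z t p.1))
      (Ω ×ˢ Ω))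
    (hint2 : ∀ t ≥ (0 : ℝ), IntegrableOn
      (fun p : (Fin d → ℝ) × (Fin d → ℝ) =>
        ρ p.1 p.2 * (z t p.2 - z t p.1) * z t p.1) (Ω ×ˢ Ω))
    (hint3 : ∀ t ≥ (0 : ℝ), IntegrableOn
      (fun p : (Fin d → ℝ) × (Fin d → ℝ) =>
        ρ p.1 p.2 * (z t p.2 - z t p.1) ^ 2) (Ω ×ˢ Ω))
    (hmean : ∀ t ≥ (0 : ℝ), (∫ x in Ω, z t x) = ∫ x in Ω, u x)
    (hdui : ∀ t ≥ (0 : ℝ),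
      HasDerivAt
        (fun s => (1 / (volume Ω).toReal) *
          ∫ x in Ω, (z s x - (1 / (volume Ω).toReal) * ∫ y in Ω, z s y) ^ 2)
        ((2 / (volume Ω).toReal) *
          ∫ x in Ω, (z t x - (1 / (volume Ω).toReal) * ∫ y in Ω, u y) * zt t x)
        t) :
    ∀ t ≥ (0 : ℝ),
      deriv
        (fun s => (1 / (volume Ω).toReal) *
          ∫ x in Ω, (z s x - (1 / (volume Ω).toReal) * ∫ y in Ω, z s y) ^ 2) t
      ≤ 0 := by
  intro t ht
  rw [(hdui t ht).deriv]
  set c : ℝ := (1 / (volume Ω).toReal) * ∫ y in Ω, u y with hc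
  set F : (Fin d → ℝ) × (Fin d → ℝ) → ℝ :=
    fun p => (z t p.1 - c) * (ρ p.1 p.2 * (z t p.2 - z t p.1)) with hF
  have heq : (volume : Measure ((Fin d → ℝ) × (Fin d → ℝ))).restrict (Ω ×ˢ Ω)
      = (volume.restrict Ω).prod (volume.restrict Ω) := by
    rw [Measure.volume_eq_prod]; exact (Measure.prod_restrict _ _).symm
  have hFint : IntegrableOn F (Ω ×ˢ Ω) := by
    have h := (hint2 t ht).sub ((hint1 t ht).const_mul c)
    have hFeq : F = (fun p : (Fin d → ℝ) × (Fin d → ℝ) =>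
        ρ p.1 p.2 * (z t p.2 - z t p.1) * z t p.1)
        - (fun p => c * (ρ p.1 p.2 * (z t p.2 - z t p.1))) := by
      funext p; simp only [hF, Pi.sub_apply]; ring
    rwa [hFeq]
  have hFintP : Integrable F ((volume.restrict Ω).prod (volume.restrict Ω)) := by
    rwa [← heq]
  -- step 1: rewrite the derivative integral as a double integral
  have hI : (∫ x in Ω, (z t x - c) * zt t x)
      = ∫ p in Ω ×ˢ Ω, F p := by
    have h1 : (∫ x in Ω, (z t x - c) * zt t x)
        = ∫ x in Ω, ∫ y in Ω, F (x, y) := by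
      refine setIntegral_congr_fun hΩ ?_
      intro x hx
      show (z t x - c) * zt t x = ∫ y in Ω, F (x, y)
      rw [hpde t ht x hx, ← integral_const_mul]
    rw [h1, heq]
    exact integral_integral hFintP
  rw [hI]
  -- step 2: swapped integral equals the original
  have hswap : (∫ p in Ω ×ˢ Ω, F p.swap) = ∫ p in Ω ×ˢ Ω, F p := by
    rw [heq]
    exact integral_prod_swap F
  have hFswapint : IntegrableOn (fun p => F p.swap) (Ω ×ˢ Ω) := by
    have := hFintP.swap
    rwa [← heq] at this
  -- step 3: symmetrization
  have hkey : (∫ p in Ω ×ˢ Ω, F p) + (∫ p in Ω ×ˢ Ω, F p)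
      = - ∫ p in Ω ×ˢ Ω, ρ p.1 p.2 * (z t p.2 - z t p.1) ^ 2 := by
    nth_rewrite 1 [← hswap]
    rw [← integral_add hFswapint hFint, ← integral_neg]
    refine setIntegral_congr_fun (hΩ.prod hΩ) ?_
    intro p hp
    obtain ⟨hp1, hp2⟩ := hp
    show F p.swap + F p = -(ρ p.1 p.2 * (z t p.2 - z t p.1) ^ 2)
    simp only [hF, Prod.fst_swap, Prod.snd_swap, hsymm p.2 hp2 p.1 hp1]
    ring
  have hnn : 0 ≤ ∫ p in Ω ×ˢ Ω, ρ p.1 p.2 * (z t p.2 - z t p.1) ^ 2 := by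
    refine setIntegral_nonneg (hΩ.prod hΩ) ?_
    intro p hp
    exact mul_nonneg (hnonneg p.1 hp.1 p.2 hp.2) (sq_nonneg _)
  have hJ : (∫ p in Ω ×ˢ Ω, F p) ≤ 0 := by linarith
  have h2V : 0 ≤ 2 / (volume Ω).toReal := by positivity
  exact mul_nonpos_of_nonneg_of_nonpos h2V hJ
end
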